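/- Let P_1, P_2, P_3 be monomial prime ideals of S = K[x_1,...,x_n], none contained in another, with P_1 + P_2 + P_3 = (x_1,...,x_n), P_1 = (x_1,...,x_r), and I = P_1 ∩ P_2 ∩ P_3. Then I decomposes as a direct sum of K-linear subspaces I = I_1 ⊕ I_2 ⊕ I_3 ⊕ I_4, where I_1 = (I ∩ K[x_1,...,x_r])S, I_2 = (P_2 ∩ S')S'[x_{r+1},...,x_n] ∩ (P_3 ∩ S'[x_{r+1},...,x_n]), I_3 = (P_3 ∩ S'')S''[x_{r+1},...,x_n] ∩ (P_2 ∩ S''[x_{r+1},...,x_n]), and I_4 = I ∩ S̃. -/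

import Mathlib

/-!
All subspaces in sight are monomial subspaces `restrictSupport K s`: the span of the monomials
with exponent in a set `s`, and on these, sum, intersection and independence are union,
intersection and disjointness of the exponent sets. An exponent `m` lies in `I` iff its support
meets `A₁`, `A₂` and `A₃`, and `I₁, …, I₄` are exactly the exponents of `I` whose support
meets both, only the first, only the second, or neither of `A₁ ∩ A₂` and `A₁ ∩ A₃`.
-/

open MvPolynomial

/-- The depth of a module `M` with respect to an ideal `I`: the supremum of
lengths of `M`-regular sequences with entries in `I`. -/
noncomputable def moduleDepth (R : Type*) [CommRing R] (I : Ideal R)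
    (M : Type*) [AddCommGroup M] [Module R M] : ℕ :=
  sSup {k | ∃ rs : List R, rs.length = k ∧ (∀ r ∈ rs, r ∈ I) ∧
    RingTheory.Sequence.IsRegular M rs}

/-- The Stanley space `u·K[Z]`: the `K`-span of all monomials `u·v` with
`v` a monomial in the variables of `Z`. -/
noncomputable def stanleySpace {n : ℕ} (K : Type*) [Field K] (d : Fin n →₀ ℕ)
    (Z : Finset (Fin n)) : Submodule K (MvPolynomial (Fin n) K) :=
  Submodule.span K {f | ∃ e : Fin n →₀ ℕ, (∀ i, e i ≠ 0 → i ∈ Z) ∧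
    f = monomial (d + e) (1 : K)}

/-- A Stanley decomposition of a monomial ideal `I`: a finite family of Stanley
spaces `uᵢ·K[Zᵢ]`, with each `uᵢ ∈ I`, which are independent and whose (direct)
sum is `I` as a `K`-vector space. -/
structure StanleyDecomp {n : ℕ} (K : Type*) [Field K]
    (I : Ideal (MvPolynomial (Fin n) K)) where
  m : ℕ
  u : Fin m → (Fin n →₀ ℕ)
  Z : Fin m → Finset (Fin n)
  mem : ∀ i, monomial (u i) (1 : K) ∈ I
  indep : iSupIndep fun i => stanleySpace K (u i) (Z i)
  total : (⨆ i, stanleySpace K (u i) (Z i)) = Submodule.restrictScalars K I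

/-- The Stanley depth of a monomial ideal: the largest `k` such that `I` admits a
Stanley decomposition all of whose Stanley spaces use at least `k` variables. -/
noncomputable def sdepth {n : ℕ} {K : Type*} [Field K]
    (I : Ideal (MvPolynomial (Fin n) K)) : ℕ :=
  sSup {k | ∃ D : StanleyDecomp K I, ∀ i, k ≤ (D.Z i).card}

/-- `I` is a monomial ideal if it is generated by monomials. -/
def IsMonomialIdeal {n : ℕ} {K : Type*} [Field K]
    (I : Ideal (MvPolynomial (Fin n) K)) : Prop :=
  ∃ G : Set (Fin n →₀ ℕ), I = Ideal.span ((fun d => monomial d (1 : K)) '' G)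

/-- The monomial prime ideal generated by the variables in `A`. -/
noncomputable def varIdeal {n : ℕ} (K : Type*) [Field K] (A : Finset (Fin n)) :
    Ideal (MvPolynomial (Fin n) K) :=
  Ideal.span ((fun i => (X i : MvPolynomial (Fin n) K)) '' ↑A)

/-- The graded maximal ideal `(x_1, …, x_n)`. -/
noncomputable def maxIdeal (n : ℕ) (K : Type*) [Field K] :
    Ideal (MvPolynomial (Fin n) K) :=
  varIdeal K Finset.univ

open Function

def exponentsMeeting {σ : Type*} (A : Set σ) : Set (σ →₀ ℕ) := {m | ∃ i ∈ A, m i ≠ 0}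

section Exponents
variable {σ : Type*}

lemma isUpperSet_exponentsMeeting (A : Set σ) : IsUpperSet (exponentsMeeting A) :=
  fun _ _ hle ⟨i, hi, hne⟩ => ⟨i, hi, ((Nat.pos_of_ne_zero hne).trans_le (hle i)).ne'⟩

lemma preimage_filter_exponentsMeeting (A B : Set σ) [DecidablePred (· ∈ B)] :
    Finsupp.filter (· ∈ B) ⁻¹' exponentsMeeting A = exponentsMeeting (A ∩ B) := by
  ext m
  simp [exponentsMeeting, Finsupp.filter_apply, and_assoc]

lemma setOf_support_subset_sdiff_union_compl (B C : Set σ) :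
    {m : σ →₀ ℕ | ↑m.support ⊆ B \ C ∪ Bᶜ} = (exponentsMeeting (B ∩ C))ᶜ := by
  ext m
  simp only [Set.mem_ofPred_eq, Set.mem_compl_iff, exponentsMeeting, Set.subset_def,
    Finset.mem_coe, Finsupp.mem_support_iff, Set.mem_union, Set.mem_sdiff, Set.mem_inter_iff]
  grind

lemma IsUpperSet.exists_support_subset_le_iff {s : Set (σ →₀ ℕ)} (hs : IsUpperSet s) (B : Set σ)
    [DecidablePred (· ∈ B)] (m : σ →₀ ℕ) :
    (∃ e ∈ s, ↑e.support ⊆ B ∧ e ≤ m) ↔ m.filter (· ∈ B) ∈ s := by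
  refine ⟨fun ⟨e, he, heB, hem⟩ => hs (fun i => ?_) he, fun h => ⟨_, h, ?_, fun i => ?_⟩⟩
  · rw [Finsupp.filter_apply]
    split_ifs with hi
    · exact hem i
    · rw [Finsupp.notMem_support_iff.1 fun h => hi (heB h)]
  · exact fun i hi => (Finset.mem_filter.1 hi).2
  · rw [Finsupp.filter_apply]
    split_ifs <;> simp

end Exponents

namespace MvPolynomial
variable {σ R : Type*} [CommSemiring R]

lemma restrictSupport_inter (s t : Set (σ →₀ ℕ)) :
    restrictSupport R (s ∩ t) = restrictSupport R s ⊓ restrictSupport R t := by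
  ext p
  simp only [Submodule.mem_inf, mem_restrictSupport_iff, Set.subset_inter_iff]

lemma restrictSupport_iUnion {ι : Sort*} (s : ι → Set (σ →₀ ℕ)) :
    restrictSupport R (⋃ i, s i) = ⨆ i, restrictSupport R (s i) := by
  simp only [restrictSupport_eq_span, Set.image_iUnion, Submodule.span_iUnion]

lemma restrictSupport_union (s t : Set (σ →₀ ℕ)) :
    restrictSupport R (s ∪ t) = restrictSupport R s ⊔ restrictSupport R t := by
  simp only [restrictSupport_eq_span, Set.image_union, Submodule.span_union]

lemma disjoint_restrictSupport {s t : Set (σ →₀ ℕ)} (h : Disjoint s t) :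
    Disjoint (restrictSupport R s) (restrictSupport R t) := by
  rw [Submodule.disjoint_def]
  intro p hs ht
  rw [← support_eq_empty, ← Finset.coe_eq_empty, ← Set.subset_empty_iff]
  exact h hs ht

lemma iSupIndep_restrictSupport {ι : Type*} {s : ι → Set (σ →₀ ℕ)}
    (h : Pairwise (Disjoint on s)) : iSupIndep fun i => restrictSupport R (s i) := by
  intro i
  simp only [← restrictSupport_iUnion]
  exact disjoint_restrictSupport <| Set.disjoint_iUnion_right.2 fun j =>
    Set.disjoint_iUnion_right.2 fun hj => h (Ne.symm hj)

lemma restrictSupport_quadrant_decomposition {s₁ s₂ s₃ s₄ t a b : Set (σ →₀ ℕ)}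
    (h₁ : s₁ = t ∩ a ∩ b) (h₂ : s₂ = t ∩ a ∩ bᶜ) (h₃ : s₃ = t ∩ aᶜ ∩ b)
    (h₄ : s₄ = t ∩ aᶜ ∩ bᶜ) :
    iSupIndep ![restrictSupport R s₁, restrictSupport R s₂, restrictSupport R s₃,
        restrictSupport R s₄] ∧
      restrictSupport R s₁ ⊔ restrictSupport R s₂ ⊔ restrictSupport R s₃ ⊔
        restrictSupport R s₄ = restrictSupport R t := by
  subst h₁ h₂ h₃ h₄
  constructor
  · convert iSupIndep_restrictSupport (R := R)
      (s := ![t ∩ a ∩ b, t ∩ a ∩ bᶜ, t ∩ aᶜ ∩ b, t ∩ aᶜ ∩ bᶜ]) ?_ using 1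
    · funext k
      fin_cases k <;> rfl
    · intro i j hij
      fin_cases i <;> fin_cases j <;>
        first
        | exact absurd rfl hij
        | (simp only [onFun, Set.disjoint_left, Fin.zero_eta, Fin.mk_one, Fin.reduceFinMk,
            Fin.isValue, Matrix.cons_val_zero, Matrix.cons_val_one, Matrix.cons_val,
            Set.mem_inter_iff, Set.mem_compl_iff]
           tauto)
  · simp only [← restrictSupport_union]
    congr 1
    ext m
    simp only [Set.mem_union, Set.mem_inter_iff, Set.mem_compl_iff]
    tauto

lemma toSubmodule_supported (Z : Set σ) :
    Subalgebra.toSubmodule (supported R Z) = restrictSupport R {m | ↑m.support ⊆ Z} := by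
  ext p
  simp only [Subalgebra.mem_toSubmodule, mem_supported, mem_restrictSupport_iff, Set.subset_def,
    Finset.mem_coe, mem_vars_iff_mem_support, Set.mem_ofPred_eq]
  exact ⟨fun h m hm i hi => h i ⟨m, hm, hi⟩, fun h i ⟨m, hm, hi⟩ => h m hm i hi⟩

lemma restrictScalars_span_X_image (A : Set σ) :
    (Ideal.span (X '' A : Set (MvPolynomial σ R))).restrictScalars R =
      restrictSupport R (exponentsMeeting A) := by
  ext p
  simp only [Submodule.restrictScalars_mem, mem_ideal_span_X_image, mem_restrictSupport_iff]
  rfl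

lemma restrictScalars_span_inter_supported {J : Ideal (MvPolynomial σ R)} {s : Set (σ →₀ ℕ)}
    (hJ : J.restrictScalars R = restrictSupport R s) (hs : IsUpperSet s) (B : Set σ)
    [DecidablePred (· ∈ B)] :
    (Ideal.span ((J : Set (MvPolynomial σ R)) ∩ supported R B)).restrictScalars R =
      restrictSupport R (Finsupp.filter (· ∈ B) ⁻¹' s) := by
  have hJ_mem (p : MvPolynomial σ R) : p ∈ J ↔ ↑p.support ⊆ s :=
    (SetLike.ext_iff.1 hJ p).trans (mem_restrictSupport_iff R)
  have hB_mem (p : MvPolynomial σ R) : p ∈ supported R B ↔ ∀ m ∈ p.support, ↑m.support ⊆ B :=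
    (SetLike.ext_iff.1 (toSubmodule_supported (R := R) B) p).trans (mem_restrictSupport_iff R)
  have hspan : Ideal.span ((J : Set (MvPolynomial σ R)) ∩ supported R B) =
      Ideal.span ((monomial · 1) '' {e | e ∈ s ∧ ↑e.support ⊆ B}) := by
    apply le_antisymm
    · refine Ideal.span_le.2 fun p ⟨hpJ, hpB⟩ => mem_ideal_span_monomial_image.2 fun m hm => ?_
      exact ⟨m, ⟨(hJ_mem p).1 hpJ hm, (hB_mem p).1 hpB m hm⟩, le_rfl⟩
    · refine Ideal.span_mono (Set.image_subset_iff.2 fun e ⟨hes, heB⟩ => ⟨?_, ?_⟩)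
      · exact (hJ_mem _).2 ((monomial_mem_restrictSupport R).2 (Or.inl hes))
      · exact (hB_mem _).2 fun m hm => Finset.mem_singleton.1 (support_monomial_subset hm) ▸ heB
  ext p
  rw [Submodule.restrictScalars_mem, hspan, mem_ideal_span_monomial_image,
    mem_restrictSupport_iff]
  simp only [Set.subset_def, Finset.mem_coe, Set.mem_preimage,
    ← hs.exists_support_subset_le_iff, Set.mem_ofPred_eq, and_assoc]

end MvPolynomial

lemma restrictScalars_varIdeal {n : ℕ} {K : Type*} [Field K] (A : Finset (Fin n)) :
    (varIdeal K A).restrictScalars K = restrictSupport K (exponentsMeeting ↑A) :=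
  restrictScalars_span_X_image _

/-- the special direct sum decomposition `I = I₁ ⊕ I₂ ⊕ I₃ ⊕ I₄` of
`I = P₁ ∩ P₂ ∩ P₃` into `K`-linear subspaces, where `P₁ = (x₁,…,x_r)`,
`I₁ = (I ∩ K[x₁,…,x_r])S`,
`I₂ = (P₂ ∩ S')S'[x_{r+1},…,xₙ] ∩ (P₃ ∩ S'[x_{r+1},…,xₙ])`,
`I₃ = (P₃ ∩ S'')S''[x_{r+1},…,xₙ] ∩ (P₂ ∩ S''[x_{r+1},…,xₙ])`,
`I₄ = I ∩ S̃`, with `S' = K[{xᵢ : i ≤ r, xᵢ ∉ P₃}]`, `S'' = K[{xᵢ : i ≤ r, xᵢ ∉ P₂}]`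
and `S̃ = K[{xᵢ : i ≤ r, xᵢ ∉ P₂+P₃}, x_{r+1},…,xₙ]`. -/
theorem special_decomposition_three_primes {K : Type*} [Field K] (n r : ℕ)
    (A2 A3 : Finset (Fin n)) :
    letI S := MvPolynomial (Fin n) K
    letI A1 : Finset (Fin n) := Finset.univ.filter fun i => (i : ℕ) < r
    letI P1 : Ideal S := varIdeal K A1
    letI P2 : Ideal S := varIdeal K A2
    letI P3 : Ideal S := varIdeal K A3
    letI I : Ideal S := P1 ⊓ P2 ⊓ P3
    letI I1 : Submodule K S :=
      Submodule.restrictScalars K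
        (Ideal.span ((I : Set S) ∩ (MvPolynomial.supported K (↑A1 : Set (Fin n)) : Set S)))
    letI I2 : Submodule K S :=
      Submodule.restrictScalars K
          (Ideal.span ((P2 : Set S) ∩
            (MvPolynomial.supported K (↑(A1 \ A3) : Set (Fin n)) : Set S))) ⊓
        Submodule.restrictScalars K P3 ⊓
        Subalgebra.toSubmodule
          (MvPolynomial.supported K ((↑(A1 \ A3) : Set (Fin n)) ∪ {i | r ≤ (i : ℕ)}))
    letI I3 : Submodule K S :=
      Submodule.restrictScalars K
          (Ideal.span ((P3 : Set S) ∩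
            (MvPolynomial.supported K (↑(A1 \ A2) : Set (Fin n)) : Set S))) ⊓
        Submodule.restrictScalars K P2 ⊓
        Subalgebra.toSubmodule
          (MvPolynomial.supported K ((↑(A1 \ A2) : Set (Fin n)) ∪ {i | r ≤ (i : ℕ)}))
    letI I4 : Submodule K S :=
      Submodule.restrictScalars K I ⊓
        Subalgebra.toSubmodule
          (MvPolynomial.supported K ((↑(A1 \ (A2 ∪ A3)) : Set (Fin n)) ∪ {i | r ≤ (i : ℕ)}))
    P1 ≠ ⊥ → P2 ≠ ⊥ → P3 ≠ ⊥ →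
    ¬P1 ≤ P2 → ¬P2 ≤ P1 → ¬P1 ≤ P3 → ¬P3 ≤ P1 → ¬P2 ≤ P3 → ¬P3 ≤ P2 →
    P1 ⊔ P2 ⊔ P3 = maxIdeal n K →
    iSupIndep (![I1, I2, I3, I4] : Fin 4 → Submodule K S) ∧
      I1 ⊔ I2 ⊔ I3 ⊔ I4 = Submodule.restrictScalars K I := by
  intro _ _ _ _ _ _ _ _ _ _
  set A1 : Finset (Fin n) := Finset.univ.filter fun i => (i : ℕ) < r
  have hA1 : {i : Fin n | r ≤ (i : ℕ)} = (↑A1)ᶜ := by ext; simp [A1]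
  have hI : (varIdeal K A1 ⊓ varIdeal K A2 ⊓ varIdeal K A3).restrictScalars K =
      restrictSupport K (exponentsMeeting ↑A1 ∩ exponentsMeeting ↑A2 ∩ exponentsMeeting ↑A3) := by
    simp only [Submodule.restrictScalars_inf, restrictScalars_varIdeal, restrictSupport_inter]
  have hI_upper := ((isUpperSet_exponentsMeeting (A1 : Set (Fin n))).inter
    (isUpperSet_exponentsMeeting (A2 : Set (Fin n)))).inter
    (isUpperSet_exponentsMeeting (A3 : Set (Fin n)))
  classical
  rw [restrictScalars_span_inter_supported hI hI_upper,
    restrictScalars_span_inter_supported (restrictScalars_varIdeal A2)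
      (isUpperSet_exponentsMeeting _),
    restrictScalars_span_inter_supported (restrictScalars_varIdeal A3)
      (isUpperSet_exponentsMeeting _),
    hI]
  simp only [hA1, restrictScalars_varIdeal, toSubmodule_supported, ← restrictSupport_inter,
    Set.preimage_inter, preimage_filter_exponentsMeeting, Finset.coe_sdiff, Finset.coe_union,
    setOf_support_subset_sdiff_union_compl]
  refine restrictSupport_quadrant_decomposition (a := exponentsMeeting (↑A2 ∩ ↑A1))
    (b := exponentsMeeting (↑A3 ∩ ↑A1)) ?_ ?_ ?_ ?_ <;>
  · ext m
    simp only [exponentsMeeting, Set.mem_inter_iff, Set.mem_ofPred_eq, Set.mem_compl_iff,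
      Set.mem_sdiff, Set.mem_union]
    grind
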